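/- Suppose real numbers π : (ℤ/kℤ)² → ℝ (for k ≥ 1) satisfy, for every lattice point x, the strict inequality π(x) + π(x + (2,1)) + 1 < π(x + (1,0)) + π(x + (1,1)). Then we reach a contradiction; i.e., no such assignment of weights exists. -/

import Mathlib

/-
Summing the inequality over the whole torus, every vertex appears exactly twice on each side,
since translation permutes the lattice points; the strict inequality then compares a number
with itself.
-/

theorem not_forall_sum_comp_add_lt {G ι M : Type*} [AddGroup G] [Fintype G] [Fintype ι]
    [AddCommMonoid M] [PartialOrder M] [IsOrderedCancelAddMonoid M]
    (π : G → M) (a b : ι → G) :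
    ¬ ∀ x, ∑ i, π (x + a i) < ∑ i, π (x + b i) := by
  intro h
  have hsum : ∑ x, ∑ i, π (x + a i) < ∑ x, ∑ i, π (x + b i) :=
    Finset.sum_lt_sum_of_nonempty Finset.univ_nonempty fun x _ => h x
  rw [Finset.sum_comm, Finset.sum_comm (f := fun x i => π (x + b i))] at hsum
  have shift (c : G) : ∑ x, π (x + c) = ∑ x, π x := Equiv.sum_comp (Equiv.addRight c) π
  simp only [shift] at hsum
  exact lt_irrefl _ hsum

theorem stmt13 (k : ℕ) (hk : 1 ≤ k) :
    ¬ ∃ π : ZMod k × ZMod k → ℝ,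
      ∀ x : ZMod k × ZMod k,
        π x + π (x + (2, 1)) + 1 < π (x + (1, 0)) + π (x + (1, 1)) := by
  have : NeZero k := ⟨by omega⟩
  rintro ⟨π, h⟩
  refine not_forall_sum_comp_add_lt π ![0, (2, 1)] ![(1, 0), (1, 1)] fun x => ?_
  simp only [Fin.sum_univ_two, Matrix.cons_val_zero, Matrix.cons_val_one, add_zero]
  linarith [h x]
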